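/- arXiv:0908.2272 — 2 statements merged into one kernel-verified Lean document; each statement's English description precedes it below -/
import Mathlib

section
/- Let G be a group acting on the circle S¹ by homeomorphisms in such a way that the induced diagonal action on the space T = {(p,q,r) ∈ S¹×S¹×S¹ : p, q, r pairwise distinct} is properly discontinuous, i.e., for every compact K ⊆ T the set {g ∈ G : g·K ∩ K ≠ ∅} is finite. Let ρ : G → PSL(2,ℂ) be a homomorphism and π : S¹ → ℂP¹ a continuous map which is equivariant: π(g·a) = ρ(g)·π(a) for all g ∈ G and a ∈ S¹. Suppose x ∈ ℂP¹ is such that the preimage π⁻¹(x) is finite and contains at least two points. Then x is not a conical limit point of ρ(G): there is no sequence (g_n) in G with the ρ(g_n) pairwise distinct, together with points x⁺ ≠ x⁻ in ℂP¹, such that ρ(g_n)(x) → x⁺ and the maps ρ(g_n) converge to the constant map with value x⁻ uniformly on compact subsets of ℂP¹ ∖ {x}. -/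
set_option synthInstance.maxHeartbeats 1000000

noncomputable section

/-- `SL(2,ℂ)`. -/
abbrev SL2C := Matrix.SpecialLinearGroup (Fin 2) ℂ

/-- `PSL(2,ℂ) = SL(2,ℂ)/{±I}`, the quotient of `SL(2,ℂ)` by its center. -/
abbrev PSL2C := Matrix.ProjectiveSpecialLinearGroup (Fin 2) ℂ

/-- The complex projective line `ℂP¹`, the projectivization of `ℂ²`. -/
abbrev CP1 := Projectivization ℂ (Fin 2 → ℂ)

instance : TopologicalSpace SL2C := instTopologicalSpaceSubtype
instance : TopologicalSpace CP1 := instTopologicalSpaceQuotient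

theorem projmk_congr {v w : Fin 2 → ℂ} (hv : v ≠ 0) (h : v = w) :
    Projectivization.mk ℂ v hv = Projectivization.mk ℂ w (h ▸ hv) := by subst h; rfl

/-- The action of `SL(2,ℂ)` on `ℂP¹` by Möbius transformations. -/
def sl2smul (g : SL2C) (x : CP1) : CP1 :=
  Projectivization.map (Matrix.SpecialLinearGroup.toLin' g).toLinearMap
    (Matrix.SpecialLinearGroup.toLin' g).injective x

theorem sl2smul_mk (g : SL2C) (v : Fin 2 → ℂ) (hv : v ≠ 0) :
    sl2smul g (Projectivization.mk ℂ v hv) =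
      Projectivization.mk ℂ (Matrix.SpecialLinearGroup.toLin' g v)
        (fun h => hv (by simpa using (Matrix.SpecialLinearGroup.toLin' g).map_eq_zero_iff.mp h)) := by
  simp [sl2smul, Projectivization.map_mk]

instance : MulAction SL2C CP1 where
  smul := sl2smul
  one_smul x := by
    induction x using Projectivization.ind with
    | h v hv => show sl2smul 1 _ = _; rw [sl2smul_mk]; simp
  mul_smul g h x := by
    induction x using Projectivization.ind with
    | h v hv =>
      show sl2smul (g * h) _ = sl2smul g (sl2smul h _)
      rw [sl2smul_mk, sl2smul_mk, sl2smul_mk]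
      exact projmk_congr _ (by simp <;> rfl)

/-- The center of `SL(2,ℂ)` acts trivially on `ℂP¹`. -/
theorem center_sl2smul_eq (A : SL2C) (hA : A ∈ Subgroup.center SL2C) (x : CP1) :
    sl2smul A x = x := by
  obtain ⟨r, hr, hrA⟩ := Matrix.SpecialLinearGroup.mem_center_iff.mp hA
  have hr0 : r ≠ 0 := by
    intro h
    rw [h] at hr
    simp at hr
  induction x using Projectivization.ind with
  | h v hv =>
    rw [sl2smul_mk, Projectivization.mk_eq_mk_iff]
    refine ⟨Units.mk0 r hr0, ?_⟩
    have h1 : Matrix.SpecialLinearGroup.toLin' A v = (A : Matrix (Fin 2) (Fin 2) ℂ).mulVec v := by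
      rw [Matrix.SpecialLinearGroup.toLin'_apply, Matrix.toLin'_apply]
    rw [h1, ← hrA, Matrix.scalar_apply]
    ext i
    rw [Matrix.mulVec_diagonal]
    simp [Units.smul_def]

/-- The action of `PSL(2,ℂ)` on `ℂP¹`, descended from the action of `SL(2,ℂ)`. -/
def psl2Perm : PSL2C →* Equiv.Perm CP1 :=
  QuotientGroup.lift (Subgroup.center SL2C) (MulAction.toPermHom SL2C CP1)
    (fun A hA => Equiv.ext fun x => center_sl2smul_eq A hA x)

instance (priority := 2000) : SMul PSL2C CP1 := ⟨fun g x => psl2Perm g x⟩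

instance (priority := 2000) : MulAction PSL2C CP1 where
  one_smul x := by show psl2Perm 1 x = x; simp
  mul_smul g h x := by
    show psl2Perm (g * h) x = psl2Perm g (psl2Perm h x)
    simp [map_mul]


/-! ### Basic definitions: limit sets, commensurators, parabolicity, lattices -/

open Filter Topology

/-- The sequence `γ` of elements of `PSL(2,ℂ)` converges to the constant map with value `p`
uniformly on compact subsets of `ℂP¹ ∖ {q}`.  (Since `ℂP¹` is a compact Hausdorff space, its
uniform structure is unique, and uniform convergence to a constant `p` on a set `K` is
equivalent to the requirement that for every neighbourhood `U` of `p`, eventually all the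
images of `K` lie in `U`.) -/
def TendstoConstUniformlyAway (γ : ℕ → PSL2C) (q p : CP1) : Prop :=
  ∀ U ∈ 𝓝 p, ∀ K : Set CP1, IsCompact K → q ∉ K →
    ∀ᶠ n in atTop, ∀ x ∈ K, γ n • x ∈ U

/-- The limit set `Λ_Γ ⊆ ℂP¹` of a subgroup `Γ ≤ PSL(2,ℂ)`: the set of points `p` for which
there exist a point `q` and a sequence of pairwise distinct elements of `Γ` converging to the
constant map `p` uniformly on compact subsets of `ℂP¹ ∖ {q}`. -/
def limitSet (Γ : Subgroup PSL2C) : Set CP1 :=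
  {p | ∃ q : CP1, ∃ γ : ℕ → PSL2C, (∀ n, γ n ∈ Γ) ∧ Function.Injective γ ∧
    TendstoConstUniformlyAway γ q p}

/-- `ℝP¹ ⊆ ℂP¹`: the set of points admitting real homogeneous coordinates. -/
def realPoints : Set CP1 :=
  {x | ∃ (w : Fin 2 → ℂ) (hw : w ≠ 0), (∀ i, (w i).im = 0) ∧ x = Projectivization.mk ℂ w hw}

/-- A round circle in `ℂP¹` is a set of the form `g • ℝP¹` with `g ∈ PSL(2,ℂ)`. -/
def IsRoundCircle (C : Set CP1) : Prop :=
  ∃ g : PSL2C, C = (g • ·) '' realPoints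

/-- An element of `PSL(2,ℂ)` is parabolic if it is not the identity and some (equivalently, any)
matrix lift to `SL(2,ℂ)` has trace `±2`. -/
def IsParabolic (g : PSL2C) : Prop :=
  g ≠ 1 ∧ ∃ A : SL2C, (QuotientGroup.mk A : PSL2C) = g ∧
    (Matrix.trace (A : Matrix (Fin 2) (Fin 2) ℂ) = 2 ∨
      Matrix.trace (A : Matrix (Fin 2) (Fin 2) ℂ) = -2)

instance : MeasurableSpace PSL2C := borel _
instance (Δ : Subgroup PSL2C) : MeasurableSpace (PSL2C ⧸ Δ) := borel _

/-- A subgroup `Δ ≤ PSL(2,ℂ)` is a lattice if it is discrete and the quotient `PSL(2,ℂ)/Δ`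
carries a nonzero finite `PSL(2,ℂ)`-invariant Borel measure. -/
def IsLattice (Δ : Subgroup PSL2C) : Prop :=
  DiscreteTopology Δ ∧
  ∃ μ : MeasureTheory.Measure (PSL2C ⧸ Δ), μ ≠ 0 ∧ μ Set.univ < ⊤ ∧
    ∀ g : PSL2C, MeasureTheory.Measure.map (fun y => g • y) μ = μ

/-- A discrete subgroup `Γ ≤ PSL(2,ℂ)` is a fibre group if it is a normal subgroup of some
lattice `Δ ≤ PSL(2,ℂ)` with `Δ/Γ` infinite cyclic or infinite dihedral; equivalently, `Γ` is
the kernel of a surjective homomorphism from a lattice `Δ` onto `ℤ` or onto the infinite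
dihedral group. -/
def IsFibreGroup (Γ : Subgroup PSL2C) : Prop :=
  ∃ Δ : Subgroup PSL2C, IsLattice Δ ∧ Γ ≤ Δ ∧
    ((∃ f : Δ →* Multiplicative ℤ, Function.Surjective f ∧ f.ker = Γ.subgroupOf Δ) ∨
     (∃ f : Δ →* DihedralGroup 0, Function.Surjective f ∧ f.ker = Γ.subgroupOf Δ))


/-! If `ρ(gₙ)` were a conical sequence for `x = π a = π b`, pass to a subsequence along which
`gₙ` moves `a, b` and two points `c, d ∉ π⁻¹(x)`, chosen on the two arcs of `S¹ ∖ {a, b}`, to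
limits `a', b', c', d'`.  Equivariance gives `π a' = π b' = x⁺` and `π c' = π d' = x⁻`, so
`{a', b'}` and `{c', d'}` are disjoint.  If `c' ≠ d'`, the triples `gₙ (a, c, d)` converge to a
triple of distinct points, contradicting proper discontinuity.  If `c' = d'`, then for large `n`
a small arc around `c'` joins `gₙ c` to `gₙ d` while avoiding `gₙ a` and `gₙ b`; pulling back by
the homeomorphism `gₙ` joins `c` to `d` in `S¹ ∖ {a, b}`, which is impossible. -/

open Filter Topology Set Pointwise ComplexConjugate

def normalizedOuterProduct (v : Fin 2 → ℂ) : Matrix (Fin 2) (Fin 2) ℂ :=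
  fun i j => v i * conj (v j) / (‖v‖ ^ 2 : ℝ)

lemma normalizedOuterProduct_smul {t : ℂ} (ht : t ≠ 0) (v : Fin 2 → ℂ) :
    normalizedOuterProduct (t • v) = normalizedOuterProduct v := by
  have ht' : ((‖t‖ ^ 2 : ℝ) : ℂ) ≠ 0 := by simpa using ht
  ext i j
  simp only [normalizedOuterProduct, Pi.smul_apply, smul_eq_mul, norm_smul, map_mul, mul_pow,
    Complex.ofReal_mul]
  rw [← mul_div_mul_left (v i * conj (v j)) _ ht', Complex.ofReal_pow, ← Complex.mul_conj']
  ring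

lemma continuousOn_normalizedOuterProduct : ContinuousOn normalizedOuterProduct {0}ᶜ := by
  refine continuousOn_pi.mpr fun i => continuousOn_pi.mpr fun j => ?_
  refine ContinuousOn.div (by fun_prop) (by fun_prop) fun v hv => ?_
  simpa using hv

lemma exists_smul_eq_of_normalizedOuterProduct_eq {v w : Fin 2 → ℂ} (hv : v ≠ 0) (hw : w ≠ 0)
    (h : normalizedOuterProduct v = normalizedOuterProduct w) : ∃ t : ℂ, t • w = v := by
  obtain ⟨j, hj⟩ := Function.ne_iff.mp hv
  have hv' : ((‖v‖ ^ 2 : ℝ) : ℂ) ≠ 0 := by simpa using hv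
  have hw' : ((‖w‖ ^ 2 : ℝ) : ℂ) ≠ 0 := by simpa using hw
  have hj' : conj (v j) ≠ 0 := by simpa using hj
  refine ⟨conj (w j) * (‖v‖ ^ 2 : ℝ) / (conj (v j) * (‖w‖ ^ 2 : ℝ)), funext fun i => ?_⟩
  have hij := congrFun (congrFun h i) j
  simp only [normalizedOuterProduct, div_eq_div_iff hv' hw'] at hij
  simp only [Pi.smul_apply, smul_eq_mul]
  field_simp
  linear_combination hij.symm

instance : T2Space CP1 := by
  let f : CP1 → Matrix (Fin 2) (Fin 2) ℂ := Quotient.lift (fun v => normalizedOuterProduct v.1) <| by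
    rintro ⟨v, hv⟩ ⟨w, hw⟩ ⟨t, rfl⟩
    exact normalizedOuterProduct_smul t.ne_zero w
  refine T2Space.of_injective_continuous (f := f) ?_ ?_
  · intro p q
    induction p using Projectivization.ind with | h v hv =>
    induction q using Projectivization.ind with | h w hw =>
    exact fun h => (Projectivization.mk_eq_mk_iff' ℂ v w hv hw).mpr
      (exists_smul_eq_of_normalizedOuterProduct_eq hv hw h)
  · exact continuous_quot_lift _
      (continuousOn_iff_continuous_domRestrict.mp continuousOn_normalizedOuterProduct)

lemma TendstoConstUniformlyAway.tendsto_smul {γ : ℕ → PSL2C} {q p : CP1}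
    (h : TendstoConstUniformlyAway γ q p) {y : CP1} (hy : y ≠ q) :
    Tendsto (fun n => γ n • y) atTop (𝓝 p) :=
  fun U hU => (h U hU {y} isCompact_singleton hy.symm).mono fun _ hn => hn y rfl

namespace Circle

open Complex Real

instance : LocallyConnectedSpace Circle :=
  ChartedSpace.locallyConnectedSpace (EuclideanSpace ℝ (Fin 1)) Circle

/-- The argument of `z` with the branch cut placed at `a`. -/
def argCutAt (a z : Circle) : ℝ := arg (z / -a : Circle)

variable {a b c d z : Circle}

lemma argCutAt_self (a : Circle) : argCutAt a a = π := by
  simp [argCutAt]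

lemma argCutAt_injective (a : Circle) : Function.Injective (argCutAt a) :=
  injective_arg.comp (div_left_injective (b := -a))

lemma argCutAt_lt_pi (h : z ≠ a) : argCutAt a z < π :=
  (arg_le_pi _).lt_of_ne (argCutAt_self a ▸ (argCutAt_injective a).ne h)

lemma argCutAt_neg_mul_exp {t : ℝ} (ht : t ∈ Ioc (-π) π) : argCutAt a (-a * exp t) = t := by
  rw [argCutAt, mul_div_cancel_left, arg_exp ht.1 ht.2]

lemma continuousOn_argCutAt (a : Circle) : ContinuousOn (argCutAt a) {a}ᶜ := by
  have : Continuous fun z : Circle => ((z / -a : Circle) : ℂ) := by fun_prop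
  exact fun z hz => ((continuousAt_arg (mem_slitPlane_iff_arg.mpr
    ⟨(argCutAt_lt_pi hz).ne, coe_ne_zero _⟩)).comp
      (f := fun z : Circle => ((z / -a : Circle) : ℂ)) this.continuousAt).continuousWithinAt

lemma notMem_connectedComponentIn_of_argCutAt_lt (hcb : argCutAt a c < argCutAt a b)
    (hbd : argCutAt a b < argCutAt a d) : d ∉ connectedComponentIn {a, b}ᶜ c := by
  intro hd
  have hc : c ∈ connectedComponentIn {a, b}ᶜ c :=
    mem_connectedComponentIn (connectedComponentIn_nonempty_iff.mp ⟨d, hd⟩)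
  have hsub : connectedComponentIn {a, b}ᶜ c ⊆ {a}ᶜ :=
    (connectedComponentIn_subset _ _).trans
      (compl_subset_compl.mpr (singleton_subset_iff.mpr (mem_insert _ _)))
  obtain ⟨z, hz, hzb⟩ := isPreconnected_connectedComponentIn.intermediate_value hc hd
    ((continuousOn_argCutAt a).mono hsub) ⟨hcb.le, hbd.le⟩
  exact connectedComponentIn_subset _ _ hz (argCutAt_injective a hzb ▸ by simp)

lemma infinite_argCutAt_preimage_Ioo (a : Circle) {s t : ℝ} (hs : -π ≤ s) (ht : t ≤ π)
    (hst : s < t) : (argCutAt a ⁻¹' Ioo s t).Infinite := by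
  refine Infinite.of_image (argCutAt a) ((Ioo_infinite hst).mono fun u hu => ?_)
  have hu' : u ∈ Ioc (-π) π := ⟨hs.trans_lt hu.1, hu.2.le.trans ht⟩
  exact ⟨-a * exp u, by rwa [mem_preimage, argCutAt_neg_mul_exp hu'], argCutAt_neg_mul_exp hu'⟩

lemma exists_notMem_connectedComponentIn (hab : a ≠ b) {F : Set Circle} (hF : F.Finite) :
    ∃ c d, c ∉ F ∧ d ∉ F ∧ c ≠ d ∧ d ∉ connectedComponentIn {a, b}ᶜ c := by
  obtain ⟨c, hc, hcF⟩ := ((infinite_argCutAt_preimage_Ioo a le_rfl (arg_le_pi _)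
    (neg_pi_lt_arg _)).sdiff hF).nonempty
  obtain ⟨d, hd, hdF⟩ := ((infinite_argCutAt_preimage_Ioo a (neg_pi_lt_arg _).le le_rfl
    (argCutAt_lt_pi hab.symm)).sdiff hF).nonempty
  refine ⟨c, d, hcF, hdF, ?_, notMem_connectedComponentIn_of_argCutAt_lt hc.2 hd.1⟩
  exact fun h => (hc.2.trans hd.1).ne (congrArg (argCutAt a) h)

end Circle

section Dynamics

variable {G X : Type*} [Group G] [TopologicalSpace X] [MulAction G X]

lemma mem_connectedComponentIn_of_smul [ContinuousConstSMul G X] (g : G) {A : Set X} {c d : X}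
    (h : g • d ∈ connectedComponentIn (g • A)ᶜ (g • c)) : d ∈ connectedComponentIn Aᶜ c := by
  have hc : g • c ∈ (g • A)ᶜ := connectedComponentIn_nonempty_iff.mp ⟨_, h⟩
  have := (continuous_const_smul g⁻¹).continuousOn.mapsTo_connectedComponentIn hc h
  rw [image_smul, ← smul_set_compl, inv_smul_smul, inv_smul_smul] at this
  simpa using this

lemma mem_connectedComponentIn_pair_of_tendsto [T2Space X] [LocallyConnectedSpace X]
    [ContinuousConstSMul G X] {g : ℕ → G} {a b c d a' b' e : X}
    (ha : Tendsto (fun n => g n • a) atTop (𝓝 a')) (hb : Tendsto (fun n => g n • b) atTop (𝓝 b'))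
    (hc : Tendsto (fun n => g n • c) atTop (𝓝 e)) (hd : Tendsto (fun n => g n • d) atTop (𝓝 e))
    (hae : a' ≠ e) (hbe : b' ≠ e) : d ∈ connectedComponentIn {a, b}ᶜ c := by
  obtain ⟨Ua, Ue, hUa, hUe, hdisj_a⟩ := t2_separation_nhds hae
  obtain ⟨Ub, Ue', hUb, hUe', hdisj_b⟩ := t2_separation_nhds hbe
  have hW := connectedComponentIn_mem_nhds (inter_mem hUe hUe')
  obtain ⟨n, han, hbn, hcn, hdn⟩ := (ha.eventually_mem hUa).and
    ((hb.eventually_mem hUb).and ((hc.eventually_mem hW).and (hd.eventually_mem hW))) |>.exists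
  refine mem_connectedComponentIn_of_smul (g n) ?_
  refine isPreconnected_connectedComponentIn.subset_connectedComponentIn hcn ?_ hdn
  intro z hz
  have hz' := connectedComponentIn_subset _ _ hz
  rw [smul_set_insert, smul_set_singleton, mem_compl_iff, mem_insert_iff, mem_singleton_iff]
  rintro (rfl | rfl)
  · exact hdisj_a.ne_of_mem han hz'.1 rfl
  · exact hdisj_b.ne_of_mem hbn hz'.2 rfl

lemma not_tendsto_smul_of_properlyDiscontinuousOn [LocallyCompactSpace X] {T : Set X}
    (hT : IsOpen T)
    (hpd : ∀ K : Set X, IsCompact K → K ⊆ T → {g : G | ((g • ·) '' K ∩ K).Nonempty}.Finite)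
    {g : ℕ → G} (hg : Function.Injective g) {y y' : X} (hy : y ∈ T) (hy' : y' ∈ T) :
    ¬ Tendsto (fun n => g n • y) atTop (𝓝 y') := by
  intro h
  obtain ⟨K, hK, hKT, hKc⟩ := local_compact_nhds (hT.mem_nhds hy')
  obtain ⟨N, hN⟩ := eventually_atTop.mp (h.eventually_mem hK)
  refine hpd (insert y K) (hKc.insert y) (insert_subset hy hKT) |>.not_infinite <|
    infinite_of_injective_forall_mem (hg.comp (add_right_injective N)) fun m => ?_
  exact ⟨g (N + m) • y, mem_image_of_mem _ (mem_insert _ _),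
    mem_insert_of_mem _ (hN _ (Nat.le_add_right _ _))⟩

lemma isOpen_setOf_pairwise_ne_triple [T2Space X] :
    IsOpen {t : X × X × X | t.1 ≠ t.2.1 ∧ t.1 ≠ t.2.2 ∧ t.2.1 ≠ t.2.2} :=
  (isOpen_ne_fun (by fun_prop) (by fun_prop)).inter
    ((isOpen_ne_fun (by fun_prop) (by fun_prop)).inter (isOpen_ne_fun (by fun_prop) (by fun_prop)))

lemma eq_of_tendsto_smul_of_equivariant {H Y : Type*} [SMul H Y] [TopologicalSpace Y] [T2Space Y]
    {f : X → Y} (hf : Continuous f) {ρ : G → H} (hfρ : ∀ g x, f (g • x) = ρ g • f x)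
    {g : ℕ → G} {x x' : X} {y : Y} (hx : Tendsto (fun n => g n • x) atTop (𝓝 x'))
    (hy : Tendsto (fun n => ρ (g n) • f x) atTop (𝓝 y)) : f x' = y :=
  tendsto_nhds_unique ((hf.tendsto x').comp hx) (by simpa only [Function.comp_def, hfρ] using hy)

end Dynamics

/-- **Exceptional points are not conical.**  Let `G` act on the circle `S¹` by homeomorphisms
so that the diagonal action on the space of distinct triples is properly discontinuous, let
`ρ : G → PSL(2,ℂ)` be a homomorphism and `π : S¹ → ℂP¹` a continuous `ρ`-equivariant map.  If
`x ∈ ℂP¹` has finite preimage under `π` containing at least two points, then `x` is not a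
conical limit point of `ρ(G)`. -/
theorem not_conicalLimitPoint_of_multiple_preimages
    (G : Type) [Group G] [MulAction G Circle]
    (hcont : ∀ g : G, Continuous (fun a : Circle => g • a))
    (hpd : ∀ K : Set (Circle × Circle × Circle), IsCompact K →
      K ⊆ {t : Circle × Circle × Circle | t.1 ≠ t.2.1 ∧ t.1 ≠ t.2.2 ∧ t.2.1 ≠ t.2.2} →
      {g : G | ((g • ·) '' K ∩ K).Nonempty}.Finite)
    (ρ : G →* PSL2C) (π : Circle → CP1) (hπ : Continuous π)
    (heqv : ∀ (g : G) (a : Circle), π (g • a) = ρ g • π a)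
    (x : CP1) (hfin : (π ⁻¹' {x}).Finite)
    (h2 : ∃ a b : Circle, π a = x ∧ π b = x ∧ a ≠ b) :
    ¬ ∃ (gs : ℕ → G) (xp xm : CP1), Function.Injective (fun n => ρ (gs n)) ∧ xp ≠ xm ∧
        Filter.Tendsto (fun n => ρ (gs n) • x) Filter.atTop (nhds xp) ∧
        TendstoConstUniformlyAway (fun n => ρ (gs n)) x xm := by
  rintro ⟨gs, xp, xm, hinj, hpm, hto, hunif⟩
  obtain ⟨a, b, rfl, hπb, hab⟩ := h2
  obtain ⟨c, d, hc, hd, hcd, hsep⟩ := Circle.exists_notMem_connectedComponentIn hab hfin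
  have : ContinuousConstSMul G Circle := ⟨hcont⟩
  obtain ⟨⟨a', b', c', d'⟩, φ, hφ, hlim⟩ :=
    CompactSpace.tendsto_subseq fun n => (gs n • a, gs n • b, gs n • c, gs n • d)
  have hlim_a : Tendsto (fun n => gs (φ n) • a) atTop (𝓝 a') := hlim.fst_nhds
  have hlim_b : Tendsto (fun n => gs (φ n) • b) atTop (𝓝 b') := hlim.snd_nhds.fst_nhds
  have hlim_c : Tendsto (fun n => gs (φ n) • c) atTop (𝓝 c') := hlim.snd_nhds.snd_nhds.fst_nhds
  have hlim_d : Tendsto (fun n => gs (φ n) • d) atTop (𝓝 d') := hlim.snd_nhds.snd_nhds.snd_nhds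
  have hπ_lim {y y' : Circle} (hy : Tendsto (fun n => gs (φ n) • y) atTop (𝓝 y')) {q : CP1}
      (hq : Tendsto (fun n => ρ (gs n) • π y) atTop (𝓝 q)) : π y' = q :=
    eq_of_tendsto_smul_of_equivariant hπ heqv hy (hq.comp hφ.tendsto_atTop)
  have ha' : π a' = xp := hπ_lim hlim_a hto
  have hb' : π b' = xp := hπ_lim hlim_b (hπb ▸ hto)
  have hc' : π c' = xm := hπ_lim hlim_c (hunif.tendsto_smul hc)
  have hd' : π d' = xm := hπ_lim hlim_d (hunif.tendsto_smul hd)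
  have hne {y z : Circle} (hy : π y = xp) (hz : π z = xm) : y ≠ z :=
    fun h => hpm (hy ▸ hz ▸ congrArg π h)
  rcases eq_or_ne c' d' with rfl | hc'd'
  · exact hsep (mem_connectedComponentIn_pair_of_tendsto hlim_a hlim_b hlim_c hlim_d
      (hne ha' hc') (hne hb' hc'))
  · exact not_tendsto_smul_of_properlyDiscontinuousOn isOpen_setOf_pairwise_ne_triple hpd
      (hinj.of_comp.comp hφ.injective) (y := (a, c, d)) (y' := (a', c', d'))
      ⟨ne_of_mem_of_not_mem rfl hc, ne_of_mem_of_not_mem rfl hd, hcd⟩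
      ⟨hne ha' hc', hne ha' hd', hc'd'⟩ (hlim_a.prodMk_nhds (hlim_c.prodMk_nhds hlim_d))
end
end

section
/- Let Γ ≤ PSL(2,ℂ) be a discrete subgroup and let x ∈ ℂP¹. The following are equivalent: (a) there exist a sequence (γ_m) in Γ and points x⁺ ≠ x⁻ in ℂP¹ such that γ_m(x) → x⁺ and the γ_m converge to the constant map with value x⁻ uniformly on compact subsets of ℂP¹ ∖ {x}; (b) there exists a sequence (γ_n) of pairwise distinct elements of Γ such that for every y ∈ ℂP¹ with y ≠ x, the closure of the set {(γ_n(x), γ_n(y)) : n ∈ ℕ} in ℂP¹ × ℂP¹ is disjoint from the diagonal (equivalently, inf_n d(γ_n(x), γ_n(y)) > 0 for any metric d inducing the topology of ℂP¹). Either condition characterizes x being a conical limit point of Γ. -/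
set_option synthInstance.maxHeartbeats 1000000

noncomputable section

/-! ### Basic definitions: limit sets, commensurators, parabolicity, lattices -/

open Filter Topology

/-!
An injective sequence `γₙ` in a discrete subgroup cannot converge, so its matrix lifts `Aₙ` are
unbounded; after dividing by their norms a subsequence converges to a nonzero matrix `B` with
`det B = lim ‖Aₙ‖⁻² = 0`, that is `B = u wᵀ`. Hence `γₙ → [u]` uniformly on compact sets avoiding
the point `[w⊥] = ker B`: every injective sequence in `Γ` has a subsequence converging to a
constant away from one point.

(b) ⇒ (a): apply this to the sequence of (b). If the exceptional point were not `x`, then `γₙ x`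
and `γₙ y` (for a third point `y`) would tend to the same point, so `(γₙ x, γₙ y)` would accumulate
on the diagonal; for the same reason a limit `x⁺` of `γₙ x` differs from the attracting point `x⁻`.

(a) ⇒ (b): uniform convergence to a constant off `x` prevents any element from recurring
infinitely often, so `γ` has an injective subsequence, along which `(γₙ x, γₙ y)` accumulates only
at `(x⁺, x⁻)`, off the diagonal.
-/

open Function Set Matrix Projectivization
open scoped Matrix.Norms.Elementwise

theorem exists_smul_eq_of_det_eq_zero {K : Type*} [Field K] {v w : Fin 2 → K} (hw : w ≠ 0)
    (h : (of ![v, w]).det = 0) : ∃ a : K, a • w = v := by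
  simp only [det_fin_two, of_apply, cons_val_zero, cons_val_one] at h
  by_cases h0 : w 0 = 0
  · have h1 : w 1 ≠ 0 := fun h1 => hw (funext fun i => by fin_cases i <;> simp [h0, h1])
    refine ⟨v 1 / w 1, funext fun i => ?_⟩
    fin_cases i
    · simp only [h0, mul_zero, sub_zero, mul_eq_zero, Fin.zero_eta, Pi.smul_apply,
        smul_eq_mul] at h ⊢
      exact (h.resolve_right h1).symm
    · simp [h1]
  · refine ⟨v 0 / w 0, funext fun i => ?_⟩
    fin_cases i
    · simp [h0]
    · simp only [Fin.mk_one, Pi.smul_apply, smul_eq_mul]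
      field_simp
      linear_combination h

theorem Projectivization.mk_eq_mk_iff_det {K : Type*} [Field K] {v w : Fin 2 → K} (hv : v ≠ 0)
    (hw : w ≠ 0) : mk K v hv = mk K w hw ↔ (of ![v, w]).det = 0 := by
  rw [mk_eq_mk_iff']
  refine ⟨?_, exists_smul_eq_of_det_eq_zero hw⟩
  rintro ⟨a, rfl⟩
  simp only [det_fin_two, of_apply, cons_val_zero, cons_val_one, Pi.smul_apply, smul_eq_mul]
  ring

theorem Matrix.exists_eq_vecMulVec_of_det_eq_zero {K : Type*} [Field K]
    {B : Matrix (Fin 2) (Fin 2) K} (hdet : B.det = 0) : ∃ u w : Fin 2 → K, B = vecMulVec u w := by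
  by_cases h0 : B 0 = 0
  · exact ⟨![0, 1], B 1, by ext i j; fin_cases i <;> simp [vecMulVec_apply, h0]⟩
  · obtain ⟨t, ht⟩ := exists_smul_eq_of_det_eq_zero (v := B 1) h0 (by
      simp only [det_fin_two, of_apply, cons_val_zero, cons_val_one] at hdet ⊢
      linear_combination -hdet)
    exact ⟨![1, t], B 0, by ext i j; fin_cases i <;> simp [vecMulVec_apply, ← ht]⟩

theorem Matrix.exists_mk_mulVec_eq_of_det_eq_zero {K : Type*} [Field K]
    {B : Matrix (Fin 2) (Fin 2) K} (hB : B ≠ 0) (hdet : B.det = 0) :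
    ∃ a b : Projectivization K (Fin 2 → K), ∀ v (hv : v ≠ 0), mk K v hv ≠ b →
      ∃ h : B *ᵥ v ≠ 0, mk K (B *ᵥ v) h = a := by
  obtain ⟨u, w, rfl⟩ := exists_eq_vecMulVec_of_det_eq_zero hdet
  obtain ⟨hu, hw⟩ : u ≠ 0 ∧ w ≠ 0 := by simpa [not_or] using hB
  have hw' : ![w 1, -w 0] ≠ 0 := fun h => hw (funext fun i => by
    fin_cases i
    · simpa using congrFun h 1
    · simpa using congrFun h 0)
  refine ⟨mk K u hu, mk K ![w 1, -w 0] hw', fun v hv hvb => ?_⟩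
  have hwv : w ⬝ᵥ v ≠ 0 := fun h => hvb ((mk_eq_mk_iff_det hv hw').2 (by
    simp only [dotProduct, Fin.sum_univ_two, det_fin_two, of_apply, cons_val', cons_val_zero,
      cons_val_fin_one, cons_val_one, mul_neg] at h ⊢
    linear_combination -h))
  have hBv : vecMulVec u w *ᵥ v = (w ⬝ᵥ v) • u := by
    rw [vecMulVec_mulVec, op_smul_eq_smul]
  exact ⟨hBv ▸ smul_ne_zero hwv hu, (mk_eq_mk_iff' K _ _ _ hu).2 ⟨_, hBv.symm⟩⟩

theorem Subgroup.not_tendsto_nhds_of_injective {G : Type*} [Group G] [TopologicalSpace G]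
    [IsTopologicalGroup G] {Γ : Subgroup G} [DiscreteTopology Γ] {γ : ℕ → G}
    (hmem : ∀ n, γ n ∈ Γ) (hinj : Injective γ) (g : G) : ¬ Tendsto γ atTop (𝓝 g) := by
  intro h
  have hquot : Tendsto (fun n => (γ n)⁻¹ * γ (n + 1)) atTop (𝓝 1) := by
    simpa using h.inv.mul (h.comp (tendsto_add_atTop_nat 1))
  have hbot : Tendsto (fun n => (γ n)⁻¹ * γ (n + 1)) atTop (𝓝[≠] 1 ⊓ 𝓟 Γ) :=
    tendsto_inf.2 ⟨tendsto_nhdsWithin_iff.2 ⟨hquot, .of_forall fun n =>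
        by simpa [inv_mul_eq_one] using hinj.ne n.lt_succ_self.ne⟩,
      tendsto_principal.2 (.of_forall fun n => Γ.mul_mem (Γ.inv_mem (hmem n)) (hmem _))⟩
  rw [discreteTopology_subtype_iff.1 ‹_› 1 Γ.one_mem] at hbot
  exact hbot.neBot.ne rfl

theorem exists_strictMono_injective_comp {α : Type*} {u : ℕ → α} (hu : (range u).Infinite) :
    ∃ φ : ℕ → ℕ, StrictMono φ ∧ Injective (u ∘ φ) := by
  classical
  set p : ℕ → Prop := fun n => ∀ m < n, u m ≠ u n
  have hfirst : range u ⊆ u '' {n | p n} := by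
    rintro _ ⟨k, rfl⟩
    have hex : ∃ n, u n = u k := ⟨k, rfl⟩
    exact ⟨Nat.find hex, fun m hm => Nat.find_min hex hm ∘ (·.trans (Nat.find_spec hex)),
      Nat.find_spec hex⟩
  have hp : {n | p n}.Infinite := (hu.mono hfirst).of_image u
  refine ⟨Nat.nth p, Nat.nth_strictMono hp, Injective.of_lt_imp_ne fun m n hmn => ?_⟩
  exact Nat.nth_mem_of_infinite hp n _ (Nat.nth_strictMono hp hmn)

theorem exists_ne_and_ne {α : Type*} [Infinite α] (x y : α) : ∃ z, z ≠ x ∧ z ≠ y := by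
  classical
  simpa [not_or] using Infinite.exists_notMem_finset ({x, y} : Finset α)

theorem disjoint_closure_range_diagonal {X : Type*} [TopologicalSpace X] [T2Space X]
    {f g : ℕ → X} {p q : X} (hfg : ∀ n, f n ≠ g n) (hf : Tendsto f atTop (𝓝 p))
    (hg : Tendsto g atTop (𝓝 q)) (hpq : p ≠ q) :
    Disjoint (closure (range fun n => (f n, g n))) (diagonal X) := by
  have hcl := closure_minimal (subset_insert _ _)
    (hf.prodMk_nhds hg).isCompact_insert_range.isClosed
  refine disjoint_left.2 fun z hz hzd => ?_
  rcases hcl hz with rfl | ⟨n, rfl⟩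
  exacts [hpq hzd, hfg n hzd]

theorem ne_of_disjoint_closure_range_diagonal {X : Type*} [TopologicalSpace X] {f g : ℕ → X}
    (hd : Disjoint (closure (range fun n => (f n, g n))) (diagonal X)) {φ : ℕ → ℕ} {p q : X}
    (hf : Tendsto (f ∘ φ) atTop (𝓝 p)) (hg : Tendsto (g ∘ φ) atTop (𝓝 q)) : p ≠ q := by
  rintro rfl
  exact disjoint_left.1 hd
    (mem_closure_of_tendsto (hf.prodMk_nhds hg) (.of_forall fun n => mem_range_self (φ n))) rfl

theorem continuous_mk' : Continuous (mk' ℂ : {v : Fin 2 → ℂ // v ≠ 0} → CP1) :=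
  continuous_quotient_mk'

theorem isOpenMap_mk' : IsOpenMap (mk' ℂ : {v : Fin 2 → ℂ // v ≠ 0} → CP1) := by
  intro U hU
  have hsat : mk' ℂ ⁻¹' (mk' ℂ '' U) = ⋃ c : ℂˣ, (c • ·) ⁻¹' U := by
    ext s
    simp only [mem_preimage, mem_image, mem_iUnion, mk'_eq_mk, mk_eq_mk_iff]
    constructor
    · rintro ⟨u, hu, c, hc⟩
      exact ⟨c, by convert hu; exact Subtype.ext hc⟩
    · rintro ⟨c, hc⟩
      exact ⟨c • s, hc, c, rfl⟩
  refine isOpen_coinduced.2 (hsat ▸ isOpen_iUnion fun c => hU.preimage ?_)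
  exact (continuous_subtype_val.const_smul (c : ℂ)).subtype_mk _

instance inst_s10 : T2Space CP1 := by
  refine (t2Space_iff_of_isOpenQuotientMap
    ⟨Quotient.mk''_surjective, continuous_mk', isOpenMap_mk'⟩).2 ?_
  show IsClosed {q : {v : Fin 2 → ℂ // v ≠ 0} × {v : Fin 2 → ℂ // v ≠ 0} |
    mk ℂ q.1.1 q.1.2 = mk ℂ q.2.1 q.2.2}
  simp only [mk_eq_mk_iff_det, det_fin_two, of_apply, cons_val_zero, cons_val_one]
  exact (isClosed_eq (f := fun p : (Fin 2 → ℂ) × (Fin 2 → ℂ) => p.1 0 * p.2 1 - p.1 1 * p.2 0)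
    (by fun_prop) continuous_const).preimage (continuous_subtype_val.prodMap continuous_subtype_val)

instance : Infinite CP1 := by
  refine Infinite.of_injective (fun t : ℂ => mk ℂ ![1, t] (by simp)) fun s t h => ?_
  simpa [mk_eq_mk_iff_det, det_fin_two, sub_eq_zero, eq_comm] using h

def mkSphere (s : Metric.sphere (0 : Fin 2 → ℂ) 1) : CP1 :=
  mk ℂ s (ne_zero_of_mem_unit_sphere s)

theorem continuous_mkSphere : Continuous mkSphere :=
  continuous_mk'.comp (continuous_subtype_val.subtype_mk _)

theorem surjective_mkSphere : Surjective mkSphere := by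
  intro z
  refine ⟨⟨(‖z.rep‖ : ℂ)⁻¹ • z.rep, by simp [norm_smul, z.rep_nonzero]⟩, ?_⟩
  exact ((mk_eq_mk_iff' ℂ _ _ _ _).2 ⟨_, rfl⟩).trans z.mk_rep

instance : SeqCompactSpace CP1 := by
  have := isSeqCompact_univ.image continuous_mkSphere.seqContinuous
  rwa [image_univ, surjective_mkSphere.range_eq, ← seqCompactSpace_iff] at this

theorem eventually_exists_mk_mem {u₀ : Fin 2 → ℂ} (h₀ : u₀ ≠ 0) {U : Set CP1}
    (hU : U ∈ 𝓝 (mk ℂ u₀ h₀)) : ∀ᶠ u in 𝓝 u₀, ∃ h : u ≠ 0, mk ℂ u h ∈ U := by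
  rw [← map_nhds_subtype_coe_eq_nhds (p := (· ≠ 0)) h₀ (eventually_ne_nhds h₀)]
  exact (continuous_mk'.continuousAt.eventually hU).mono fun s hs => ⟨s.2, hs⟩

theorem smul_mk_eq_mk_smul_mulVec (A : SL2C) {c : ℂ} (hc : c ≠ 0) {v : Fin 2 → ℂ} (hv : v ≠ 0)
    (h : (c • (A : Matrix (Fin 2) (Fin 2) ℂ)) *ᵥ v ≠ 0) :
    (A : PSL2C) • mk ℂ v hv = mk ℂ ((c • (A : Matrix (Fin 2) (Fin 2) ℂ)) *ᵥ v) h := by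
  rw [show (A : PSL2C) • mk ℂ v hv = sl2smul A (mk ℂ v hv) from rfl, sl2smul_mk, mk_eq_mk_iff']
  exact ⟨c⁻¹, by simp [smul_mulVec, hc, Matrix.SpecialLinearGroup.toLin'_apply]⟩

-- Mathlib's instance is stated for its own (defeq) topology on `SL`, which instance search does not
-- unify with the `TopologicalSpace SL2C` instance above.
instance : IsTopologicalGroup SL2C := Matrix.SpecialLinearGroup.topologicalGroup

theorem tendsto_norm_atTop_of_injective {Γ : Subgroup PSL2C} [DiscreteTopology Γ]
    {γ : ℕ → PSL2C} (hmem : ∀ n, γ n ∈ Γ) (hinj : Injective γ) {A : ℕ → SL2C}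
    (hA : ∀ n, (A n : PSL2C) = γ n) :
    Tendsto (fun n => ‖(A n : Matrix (Fin 2) (Fin 2) ℂ)‖) atTop atTop := by
  by_contra h
  obtain ⟨C, hC⟩ : ∃ C, ∃ᶠ n in atTop, ‖(A n : Matrix (Fin 2) (Fin 2) ℂ)‖ < C := by
    simpa [tendsto_atTop, frequently_atTop] using h
  obtain ⟨M, -, φ, hφ, hM⟩ := tendsto_subseq_of_frequently_bounded
    (x := fun n => (A n : Matrix (Fin 2) (Fin 2) ℂ)) (Metric.isBounded_closedBall (x := 0) (r := C))
    (hC.mono fun n hn => mem_closedBall_zero_iff.2 hn.le)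
  have hdet : M.det = 1 := tendsto_nhds_unique ((continuous_id.matrix_det.tendsto M).comp hM)
    (by simp [comp_def, Matrix.SpecialLinearGroup.det_coe])
  let A₀ : SL2C := ⟨M, hdet⟩
  refine Subgroup.not_tendsto_nhds_of_injective (fun n => hmem (φ n)) (hinj.comp hφ.injective)
    (A₀ : PSL2C) ?_
  have hlift : Tendsto (fun n => A (φ n)) atTop (𝓝 A₀) := tendsto_subtype_rng.2 hM
  exact ((QuotientGroup.continuous_mk.tendsto A₀).comp hlift).congr fun n => hA (φ n)

theorem exists_tendsto_smul_of_tendsto_norm_atTop {n : Type*} [Fintype n] [DecidableEq n]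
    [Nonempty n] {A : ℕ → Matrix n n ℂ} (hdet : ∀ k, (A k).det = 1)
    (hA : Tendsto (fun k => ‖A k‖) atTop atTop) :
    ∃ (φ : ℕ → ℕ) (c : ℕ → ℂ) (B : Matrix n n ℂ), StrictMono φ ∧ (∀ k, c k ≠ 0) ∧ B ≠ 0 ∧
      B.det = 0 ∧ Tendsto (fun k => c k • A (φ k)) atTop (𝓝 B) := by
  have hpos : ∀ k, 0 < ‖A k‖ := fun k => norm_pos_iff.2 fun h => by simpa [h] using hdet k
  set c : ℕ → ℂ := fun k => ((‖A k‖⁻¹ : ℝ) : ℂ)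
  have hsphere : ∀ k, c k • A k ∈ Metric.sphere 0 1 := fun k => by
    simp [c, norm_smul, (hpos k).ne']
  obtain ⟨B, hB, φ, hφ, hlim⟩ := (isCompact_sphere (0 : Matrix n n ℂ) 1).tendsto_subseq hsphere
  have hc : Tendsto (fun k => c (φ k)) atTop (𝓝 0) := by
    simpa [c, comp_def] using (Complex.continuous_ofReal.tendsto 0).comp
      (tendsto_inv_atTop_zero.comp (hA.comp hφ.tendsto_atTop))
  refine ⟨φ, fun k => c (φ k), B, hφ, fun k => by simp [c, (hpos _).ne'],
    ne_zero_of_mem_unit_sphere ⟨B, hB⟩, ?_, hlim⟩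
  refine tendsto_nhds_unique ((continuous_id.matrix_det.tendsto B).comp hlim) ?_
  simpa [comp_def, det_smul, hdet] using hc.pow (Fintype.card n)

namespace TendstoConstUniformlyAway

variable {γ : ℕ → PSL2C} {q p : CP1}

theorem tendsto (h : TendstoConstUniformlyAway γ q p) {y : CP1} (hy : y ≠ q) :
    Tendsto (fun n => γ n • y) atTop (𝓝 p) := fun U hU =>
  (h U hU {y} isCompact_singleton (Ne.symm hy)).mono fun _ hn => hn y rfl

theorem comp (h : TendstoConstUniformlyAway γ q p) {φ : ℕ → ℕ} (hφ : Tendsto φ atTop atTop) :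
    TendstoConstUniformlyAway (γ ∘ φ) q p := fun U hU K hK hqK =>
  hφ.eventually (h U hU K hK hqK)

theorem eventually_ne (h : TendstoConstUniformlyAway γ q p) (g : PSL2C) :
    ∀ᶠ n in atTop, γ n ≠ g := by
  refine not_frequently.1 fun hfreq => ?_
  have hconst : ∀ y ≠ q, g • y = p := fun y hy =>
    tendsto_nhds_unique_of_frequently_eq tendsto_const_nhds (h.tendsto hy)
      (hfreq.mono fun n hn => by rw [hn])
  obtain ⟨y₁, hy₁, -⟩ := exists_ne_and_ne q q
  obtain ⟨y₂, hy₂, hy₂₁⟩ := exists_ne_and_ne q y₁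
  exact hy₂₁ (smul_left_cancel g ((hconst y₂ hy₂).trans (hconst y₁ hy₁).symm))

theorem infinite_range (h : TendstoConstUniformlyAway γ q p) : (range γ).Infinite := by
  intro hfin
  obtain ⟨n, hn⟩ := ((hfin.eventually_all).2 fun g _ => h.eventually_ne g).exists
  exact hn (γ n) (mem_range_self n) rfl

theorem of_tendsto_smul {A : ℕ → SL2C} (hA : ∀ n, (A n : PSL2C) = γ n) {c : ℕ → ℂ}
    (hc : ∀ n, c n ≠ 0) {B : Matrix (Fin 2) (Fin 2) ℂ}
    (hB : Tendsto (fun n => c n • (A n : Matrix (Fin 2) (Fin 2) ℂ)) atTop (𝓝 B))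
    (hBqp : ∀ v (hv : v ≠ 0), mk ℂ v hv ≠ q → ∃ h : B *ᵥ v ≠ 0, mk ℂ (B *ᵥ v) h = p) :
    TendstoConstUniformlyAway γ q p := by
  intro U hU K hK hqK
  -- tube lemma for `(M, s) ↦ [M s]` around `{B} × K'`, with `K'` the lift of `K` to the unit sphere
  have hK' : IsCompact (mkSphere ⁻¹' K) := (hK.isClosed.preimage continuous_mkSphere).isCompact
  have hnear : ∀ᶠ M in 𝓝 B, ∀ s ∈ mkSphere ⁻¹' K,
      ∃ h : M *ᵥ (s : Fin 2 → ℂ) ≠ 0, mk ℂ (M *ᵥ s) h ∈ U := by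
    refine hK'.eventually_forall_of_forall_eventually fun s hs => ?_
    obtain ⟨h, hBs⟩ := hBqp s _ (ne_of_mem_of_not_mem hs hqK)
    have hcont : Continuous fun m : Matrix (Fin 2) (Fin 2) ℂ × Metric.sphere (0 : Fin 2 → ℂ) 1 =>
        m.1 *ᵥ (m.2 : Fin 2 → ℂ) :=
      continuous_fst.matrix_mulVec (continuous_subtype_val.comp continuous_snd)
    exact (hcont.tendsto (B, s)).eventually (eventually_exists_mk_mem h (hBs ▸ hU))
  filter_upwards [hB.eventually hnear] with n hn z hz
  obtain ⟨s, rfl⟩ := surjective_mkSphere z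
  obtain ⟨h, hmem⟩ := hn s hz
  rwa [← hA n, mkSphere, smul_mk_eq_mk_smul_mulVec _ (hc n) _ h]

end TendstoConstUniformlyAway

theorem exists_subseq_tendstoConstUniformlyAway {Γ : Subgroup PSL2C} [DiscreteTopology Γ]
    {γ : ℕ → PSL2C} (hmem : ∀ n, γ n ∈ Γ) (hinj : Injective γ) :
    ∃ (φ : ℕ → ℕ) (a b : CP1), StrictMono φ ∧ TendstoConstUniformlyAway (γ ∘ φ) b a := by
  have hA (n : ℕ) : ((γ n).out : PSL2C) = γ n := QuotientGroup.out_eq' (γ n)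
  obtain ⟨φ, c, B, hφ, hc, hB0, hdet, hB⟩ := exists_tendsto_smul_of_tendsto_norm_atTop
    (fun n => ((γ n).out).det_coe) (tendsto_norm_atTop_of_injective hmem hinj hA)
  obtain ⟨a, b, hab⟩ := exists_mk_mulVec_eq_of_det_eq_zero hB0 hdet
  exact ⟨φ, a, b, hφ, .of_tendsto_smul (fun n => hA (φ n)) hc hB hab⟩

/-- The two sphere-at-infinity characterizations of a conical limit point of a discrete
subgroup of `PSL(2,ℂ)` agree. -/
theorem conicalLimitPoint_characterizations
    (Γ : Subgroup PSL2C) (hdisc : DiscreteTopology Γ) (x : CP1) :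
    (∃ (γ : ℕ → PSL2C) (xp xm : CP1), (∀ m, γ m ∈ Γ) ∧ xp ≠ xm ∧
        Filter.Tendsto (fun m => γ m • x) Filter.atTop (nhds xp) ∧
        TendstoConstUniformlyAway γ x xm) ↔
      (∃ γ : ℕ → PSL2C, (∀ n, γ n ∈ Γ) ∧ Function.Injective γ ∧
        ∀ y : CP1, y ≠ x →
          Disjoint (closure {p : CP1 × CP1 | ∃ n, p = (γ n • x, γ n • y)})
            (Set.diagonal CP1)) := by
  have hrange (γ : ℕ → PSL2C) (y : CP1) :
      {p : CP1 × CP1 | ∃ n, p = (γ n • x, γ n • y)} = range fun n => (γ n • x, γ n • y) :=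
    ext fun _ => exists_congr fun _ => eq_comm
  simp_rw [hrange]
  constructor
  · rintro ⟨γ, xp, xm, hmem, hne, hx, hγ⟩
    obtain ⟨φ, hφ, hinj⟩ := exists_strictMono_injective_comp hγ.infinite_range
    refine ⟨γ ∘ φ, fun n => hmem _, hinj, fun y hy => ?_⟩
    exact disjoint_closure_range_diagonal (fun n h => hy (smul_left_cancel _ h).symm)
      (hx.comp hφ.tendsto_atTop) ((hγ.tendsto hy).comp hφ.tendsto_atTop) hne
  · rintro ⟨γ, hmem, hinj, hcl⟩
    obtain ⟨φ, a, b, hφ, hγ⟩ := exists_subseq_tendstoConstUniformlyAway hmem hinj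
    obtain rfl : x = b := by
      by_contra hxb
      obtain ⟨y, hyx, hyb⟩ := exists_ne_and_ne x b
      exact ne_of_disjoint_closure_range_diagonal (hcl y hyx) (hγ.tendsto hxb) (hγ.tendsto hyb) rfl
    obtain ⟨xp, ψ, hψ, hxp⟩ := SeqCompactSpace.tendsto_subseq fun n => γ (φ n) • x
    obtain ⟨y, hyx⟩ := exists_ne x
    have hy := (hγ.tendsto hyx).comp hψ.tendsto_atTop
    exact ⟨γ ∘ φ ∘ ψ, xp, a, fun n => hmem _,
      ne_of_disjoint_closure_range_diagonal (φ := φ ∘ ψ) (hcl y hyx) hxp hy, hxp,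
      hγ.comp hψ.tendsto_atTop⟩
end
end
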